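/- arXiv:1612.08328 — 3 statements merged into one kernel-verified Lean document; each statement's English description precedes it below -/
import Mathlib

section
/- Under the GSVD structure, the subspace S_be = (ker H_ba)^⊥ ∩ (ker H_ea)^⊥ of ℂ^{N_t} has dimension s: dim_ℂ S_be = s. -/
open Matrix

/-- The `N_r × k` GSVD factor `Σ_ba`: row blocks of sizes `N_r−r−s, s, r` and column blocks
of sizes `k−r−s, s, r`; the only nonzero blocks are the `(2,2)` block `diag(b_1,…,b_s)` and
the `(3,3)` block `I_r`.  (Row `i` is paired with column `j` iff `i + k = j + N_r`.) -/
noncomputable def SigmaBa (Nr k r s : ℕ) (b : ℕ → ℝ) : Matrix (Fin Nr) (Fin k) ℂ :=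
  Matrix.of fun i j =>
    if (i : ℕ) + k = (j : ℕ) + Nr ∧ Nr - (r + s) ≤ (i : ℕ) then
      if (i : ℕ) < Nr - r then ((b ((i : ℕ) - (Nr - (r + s))) : ℝ) : ℂ) else 1
    else 0

/-- The `N_e × k` GSVD factor `Σ_ea`: row blocks of sizes `k−r−s, s, N_e−k+r` and column blocks
of sizes `k−r−s, s, r`; the only nonzero blocks are the `(1,1)` block `I_{k−r−s}` and the
`(2,2)` block `diag(e_1,…,e_s)`. -/
noncomputable def SigmaEa (Ne k r s : ℕ) (e : ℕ → ℝ) : Matrix (Fin Ne) (Fin k) ℂ :=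
  Matrix.of fun i j =>
    if (i : ℕ) = (j : ℕ) ∧ (i : ℕ) < k - r then
      if (i : ℕ) < k - (r + s) then 1 else ((e ((i : ℕ) - (k - (r + s))) : ℝ) : ℂ)
    else 0

/-- The `k × N_t` matrix `[Ω^{-1} 0]`, where `Ω = diag(ω_0,…,ω_{k-1})`. -/
noncomputable def OmegaInvZero (k Nt : ℕ) (ω : ℕ → ℂ) : Matrix (Fin k) (Fin Nt) ℂ :=
  Matrix.of fun i j => if (j : ℕ) = (i : ℕ) then (ω (i : ℕ))⁻¹ else 0

/-- The `N_t × N_t` matrix `A` with `Ω = diag(ω_0,…,ω_{k-1})` in its top-left `k × k` block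
and zeros elsewhere. -/
noncomputable def Amat (Nt k : ℕ) (ω : ℕ → ℂ) : Matrix (Fin Nt) (Fin Nt) ℂ :=
  Matrix.of fun i j => if (i : ℕ) = (j : ℕ) ∧ (i : ℕ) < k then ω (i : ℕ) else 0

/-!
Multiplying on the left by a unitary matrix does not change a kernel, so `ker H_ba` and
`ker H_ea` are the preimages under `U_aᴴ` of the kernels of `Σ_ba [Ω⁻¹ 0]` and
`Σ_ea [Ω⁻¹ 0]`. Each of these has at most one nonzero entry per row, so its kernel is the
coordinate subspace spanned by the standard basis vectors of its zero columns: the indices outside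
`[k-r-s, k)`, resp. the indices `≥ k-r`. Hence `ker H_ba ⊔ ker H_ea` corresponds to the
coordinate subspace of the indices outside `[k-r-s, k-r)`, which has codimension `s`, and
`S_be = (ker H_ba ⊔ ker H_ea)ᗮ`.
-/

open Module Submodule

theorem Module.Basis.finrank_span_image {K V ι : Type*} [DivisionRing K] [AddCommGroup V]
    [Module K V] (b : Basis ι K V) (Z : Set ι) [Fintype Z] :
    finrank K (span K (b '' Z)) = Fintype.card Z := by
  rw [Set.image_eq_range]
  exact finrank_span_eq_card (b.linearIndependent.comp _ Subtype.val_injective)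

theorem Fin.card_setOf_not_Ico (n a c : ℕ) (hc : c ≤ n) :
    Fintype.card {j : Fin n | ¬(a ≤ (j : ℕ) ∧ (j : ℕ) < c)} = n - (c - a) := by
  rw [← Set.toFinset_card, Set.toFinset_ofPred, Finset.filter_not, Finset.card_univ_sdiff,
    Fintype.card_fin, ← Nat.card_Ico a c]
  congr 1
  refine Finset.card_bij (fun j _ => j) ?_ ?_ ?_
  · simp
  · simp [Fin.ext_iff]
  · intro x hx
    rw [Finset.mem_Ico] at hx
    exact ⟨⟨x, by omega⟩, by simpa using hx, rfl⟩

theorem EuclideanSpace.mem_span_basisFun_image {𝕜 n : Type*} [RCLike 𝕜] [Fintype n]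
    {Z : Set n} {x : EuclideanSpace 𝕜 n} :
    x ∈ span 𝕜 ((EuclideanSpace.basisFun n 𝕜).toBasis '' Z) ↔ ∀ j ∉ Z, x j = 0 := by
  rw [Basis.mem_span_image]
  simp [Set.subset_def, not_imp_comm]

theorem Matrix.mulVec_eq_zero_iff_of_row_subsingleton {R m n : Type*} [Semiring R]
    [NoZeroDivisors R] [Fintype n] {M : Matrix m n R}
    (hM : ∀ i j j', M i j ≠ 0 → M i j' ≠ 0 → j = j') (y : n → R) :
    M *ᵥ y = 0 ↔ ∀ i j, M i j ≠ 0 → y j = 0 := by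
  refine ⟨fun h i j hij => ?_, fun h => funext fun i => Finset.sum_eq_zero fun j _ => ?_⟩
  · have hrow : (M *ᵥ y) i = M i j * y j :=
      Finset.sum_eq_single j (fun j' _ hj' => by
        by_contra hne
        exact hj' (hM i j' j (left_ne_zero_of_mul hne) hij)) (by simp)
    rw [h, Pi.zero_apply, eq_comm, mul_eq_zero] at hrow
    exact hrow.resolve_left hij
  · by_cases hij : M i j = 0
    · simp [hij]
    · simp [h i j hij]

theorem Matrix.ker_toEuclideanLin_of_row_subsingleton {𝕜 m n : Type*} [RCLike 𝕜] [Fintype n]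
    [DecidableEq n] {M : Matrix m n 𝕜} (hM : ∀ i j j', M i j ≠ 0 → M i j' ≠ 0 → j = j') :
    LinearMap.ker (toEuclideanLin M) =
      span 𝕜 ((EuclideanSpace.basisFun n 𝕜).toBasis '' {j | ∀ i, M i j = 0}) := by
  ext x
  rw [LinearMap.mem_ker, EuclideanSpace.mem_span_basisFun_image, toLpLin_apply,
    WithLp.toLp_eq_zero, mulVec_eq_zero_iff_of_row_subsingleton hM]
  simp only [Set.mem_ofPred_eq, not_forall]
  exact ⟨fun h j ⟨i, hij⟩ => h i j hij, fun h i j hij => h j ⟨i, hij⟩⟩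

theorem Matrix.ker_toEuclideanLin_mul_mul_of_mem_unitaryGroup {𝕜 l m n : Type*} [RCLike 𝕜]
    [Fintype l] [Fintype m] [Fintype n] [DecidableEq l] [DecidableEq m] [DecidableEq n]
    {U : Matrix l l 𝕜} (hU : U ∈ unitaryGroup l 𝕜) (M : Matrix l m 𝕜) (N : Matrix m n 𝕜) :
    LinearMap.ker (toEuclideanLin (U * M * N)) =
      (LinearMap.ker (toEuclideanLin M)).comap (toEuclideanLin N) := by
  have hU_ker : LinearMap.ker (toEuclideanLin U) = ⊥ :=
    LinearMap.ker_eq_bot_of_inverse (g := toEuclideanLin Uᴴ) <| by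
      rw [← toLpLin_mul_same, ← star_eq_conjTranspose, mem_unitaryGroup_iff'.mp hU, toLpLin_one]
  rw [toLpLin_mul_same, toLpLin_mul_same, LinearMap.ker_comp,
    LinearMap.ker_comp_of_ker_eq_bot _ hU_ker]

theorem finrank_inf_orthogonal_comap_span_basisFun {𝕜 : Type*} [RCLike 𝕜] {n : ℕ}
    (f : EuclideanSpace 𝕜 (Fin n) ≃ₗ[𝕜] EuclideanSpace 𝕜 (Fin n)) {Z₁ Z₂ Z : Set (Fin n)}
    [Fintype Z] (hZ : Z₁ ∪ Z₂ = Z) :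
    finrank 𝕜
      ↥(((span 𝕜 ((EuclideanSpace.basisFun (Fin n) 𝕜).toBasis '' Z₁)).comap f.toLinearMap)ᗮ ⊓
        ((span 𝕜 ((EuclideanSpace.basisFun (Fin n) 𝕜).toBasis '' Z₂)).comap f.toLinearMap)ᗮ) =
      n - Fintype.card Z := by
  set B := (EuclideanSpace.basisFun (Fin n) 𝕜).toBasis
  have hsup : finrank 𝕜 ↥((span 𝕜 (B '' Z₁)).comap f.toLinearMap ⊔
      (span 𝕜 (B '' Z₂)).comap f.toLinearMap) = Fintype.card Z := by
    rw [comap_equiv_eq_map_symm, comap_equiv_eq_map_symm, ← Submodule.map_sup,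
      LinearEquiv.finrank_map_eq, ← span_union, ← Set.image_union, hZ, B.finrank_span_image]
  have hcompl := finrank_add_finrank_orthogonal
    ((span 𝕜 (B '' Z₁)).comap f.toLinearMap ⊔ (span 𝕜 (B '' Z₂)).comap f.toLinearMap)
  rw [finrank_euclideanSpace_fin] at hcompl
  rw [inf_orthogonal]
  omega

theorem mul_OmegaInvZero_apply {m : Type*} {k Nt : ℕ} (M : Matrix m (Fin k) ℂ) (ω : ℕ → ℂ)
    (i : m) (j : Fin Nt) :
    (M * OmegaInvZero k Nt ω) i j = if h : (j : ℕ) < k then M i ⟨j, h⟩ * (ω j)⁻¹ else 0 := by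
  rw [Matrix.mul_apply]
  split_ifs with h
  · rw [Finset.sum_eq_single ⟨j, h⟩ (fun l _ hl => by
      simp [OmegaInvZero, Ne.symm (Fin.val_ne_of_ne hl)]) (by simp)]
    simp [OmegaInvZero]
  · exact Finset.sum_eq_zero fun l _ => by
      rw [OmegaInvZero, of_apply, if_neg (by omega), mul_zero]

theorem mul_OmegaInvZero_apply_ne_zero_iff {m : Type*} {k Nt : ℕ} (M : Matrix m (Fin k) ℂ)
    {ω : ℕ → ℂ} (hω : ∀ i < k, ω i ≠ 0) (i : m) (j : Fin Nt) :
    (M * OmegaInvZero k Nt ω) i j ≠ 0 ↔ ∃ h : (j : ℕ) < k, M i ⟨j, h⟩ ≠ 0 := by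
  rw [mul_OmegaInvZero_apply]
  split_ifs with h
  · simp [h, hω j h]
  · simp [h]

theorem SigmaBa_apply_ne_zero_iff {Nr k r s : ℕ} {b : ℕ → ℝ} (hb : ∀ p < s, 0 < b p)
    (i : Fin Nr) (l : Fin k) :
    SigmaBa Nr k r s b i l ≠ 0 ↔ (i : ℕ) + k = l + Nr ∧ Nr - (r + s) ≤ i := by
  rw [SigmaBa, Matrix.of_apply]
  split_ifs with h hi
  · exact iff_of_true (by simpa using (hb ((i : ℕ) - (Nr - (r + s))) (by omega)).ne') h
  · exact iff_of_true one_ne_zero h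
  · simpa using h

theorem SigmaEa_apply_ne_zero_iff {Ne k r s : ℕ} {e : ℕ → ℝ} (he : ∀ p < s, 0 < e p)
    (i : Fin Ne) (l : Fin k) :
    SigmaEa Ne k r s e i l ≠ 0 ↔ (i : ℕ) = l ∧ (i : ℕ) < k - r := by
  rw [SigmaEa, Matrix.of_apply]
  split_ifs with h hi
  · exact iff_of_true one_ne_zero h
  · exact iff_of_true (by simpa using (he ((i : ℕ) - (k - (r + s))) (by omega)).ne') h
  · simpa using h

theorem ker_toEuclideanLin_SigmaBa_mul_OmegaInvZero {Nt Nr k r s : ℕ} (hrsk : r + s ≤ k)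
    (hrsNr : r + s ≤ Nr) {ω : ℕ → ℂ} (hω : ∀ i < k, ω i ≠ 0) {b : ℕ → ℝ}
    (hb : ∀ p < s, 0 < b p) :
    LinearMap.ker (toEuclideanLin (SigmaBa Nr k r s b * OmegaInvZero k Nt ω)) =
      span ℂ ((EuclideanSpace.basisFun (Fin Nt) ℂ).toBasis ''
        {j | ¬(k - (r + s) ≤ (j : ℕ) ∧ (j : ℕ) < k)}) := by
  have hne : ∀ i j, (SigmaBa Nr k r s b * OmegaInvZero k Nt ω) i j ≠ 0 ↔
      (j : ℕ) < k ∧ (i : ℕ) + k = j + Nr ∧ Nr - (r + s) ≤ i := fun i j => by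
    rw [mul_OmegaInvZero_apply_ne_zero_iff _ hω]
    simp only [SigmaBa_apply_ne_zero_iff hb, exists_prop]
  rw [Matrix.ker_toEuclideanLin_of_row_subsingleton fun i j j' hj hj' => by
    rw [hne] at hj hj'; exact Fin.ext (by omega)]
  congr 2
  ext j
  simp only [Set.mem_ofPred_eq]
  refine ⟨fun h ⟨hj₁, hj₂⟩ =>
    (hne ⟨j + Nr - k, by omega⟩ j).mpr ⟨hj₂, by dsimp only; omega⟩ (h _),
    fun h i => by_contra fun hij => ?_⟩
  have := (hne i j).mp hij
  omega

theorem ker_toEuclideanLin_SigmaEa_mul_OmegaInvZero {Nt Ne k r s : ℕ} (hkrNe : k - r ≤ Ne)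
    {ω : ℕ → ℂ} (hω : ∀ i < k, ω i ≠ 0) {e : ℕ → ℝ} (he : ∀ p < s, 0 < e p) :
    LinearMap.ker (toEuclideanLin (SigmaEa Ne k r s e * OmegaInvZero k Nt ω)) =
      span ℂ ((EuclideanSpace.basisFun (Fin Nt) ℂ).toBasis '' {j | k - r ≤ (j : ℕ)}) := by
  have hne : ∀ i j, (SigmaEa Ne k r s e * OmegaInvZero k Nt ω) i j ≠ 0 ↔
      (j : ℕ) < k ∧ (i : ℕ) = j ∧ (i : ℕ) < k - r := fun i j => by
    rw [mul_OmegaInvZero_apply_ne_zero_iff _ hω]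
    simp only [SigmaEa_apply_ne_zero_iff he, exists_prop]
  rw [Matrix.ker_toEuclideanLin_of_row_subsingleton fun i j j' hj hj' => by
    rw [hne] at hj hj'; exact Fin.ext (by omega)]
  congr 2
  ext j
  simp only [Set.mem_ofPred_eq]
  refine ⟨fun h => not_lt.mp fun hj => (hne ⟨(j : ℕ), by omega⟩ j).mpr ⟨by omega, rfl, hj⟩ (h _),
    fun h i => by_contra fun hij => ?_⟩
  have := (hne i j).mp hij
  omega

theorem finrank_S_be_general (Nt Nr Ne k r s : ℕ)
    (hrsk : r + s ≤ k) (hkNt : k ≤ Nt) (hrsNr : r + s ≤ Nr) (hkrNe : k - r ≤ Ne)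
    (Ua : Matrix (Fin Nt) (Fin Nt) ℂ) (Uba : Matrix (Fin Nr) (Fin Nr) ℂ)
    (Uea : Matrix (Fin Ne) (Fin Ne) ℂ)
    (hUa : Ua ∈ Matrix.unitaryGroup (Fin Nt) ℂ)
    (hUba : Uba ∈ Matrix.unitaryGroup (Fin Nr) ℂ)
    (hUea : Uea ∈ Matrix.unitaryGroup (Fin Ne) ℂ)
    (ω : ℕ → ℂ) (hω : ∀ i < k, ω i ≠ 0)
    (b e : ℕ → ℝ)
    (hb : ∀ p < s, 0 < b p ∧ b p < 1) (he : ∀ p < s, 0 < e p ∧ e p < 1)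
    (Hba : Matrix (Fin Nr) (Fin Nt) ℂ) (Hea : Matrix (Fin Ne) (Fin Nt) ℂ)
    (hHba : Hba = Uba * SigmaBa Nr k r s b * OmegaInvZero k Nt ω * Uaᴴ)
    (hHea : Hea = Uea * SigmaEa Ne k r s e * OmegaInvZero k Nt ω * Uaᴴ) :
    Module.finrank ℂ ↥((LinearMap.ker (Matrix.toEuclideanLin Hba))ᗮ ⊓ (LinearMap.ker (Matrix.toEuclideanLin Hea))ᗮ) = s := by
  classical
  let B := (EuclideanSpace.basisFun (Fin Nt) ℂ).toBasis
  -- `toLin B B` is `toEuclideanLin` by definition, whence the `rfl`s below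
  let eUaH := Matrix.toLinOfInv B B (mem_unitaryGroup_iff'.mp hUa) (mem_unitaryGroup_iff.mp hUa)
  have hker_ba : LinearMap.ker (toEuclideanLin Hba) =
      (span ℂ (B '' {j | ¬(k - (r + s) ≤ (j : ℕ) ∧ (j : ℕ) < k)})).comap eUaH.toLinearMap := by
    rw [hHba, Matrix.mul_assoc Uba, Matrix.ker_toEuclideanLin_mul_mul_of_mem_unitaryGroup hUba,
      ker_toEuclideanLin_SigmaBa_mul_OmegaInvZero hrsk hrsNr hω fun p hp => (hb p hp).1]
    rfl
  have hker_ea : LinearMap.ker (toEuclideanLin Hea) =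
      (span ℂ (B '' {j | k - r ≤ (j : ℕ)})).comap eUaH.toLinearMap := by
    rw [hHea, Matrix.mul_assoc Uea, Matrix.ker_toEuclideanLin_mul_mul_of_mem_unitaryGroup hUea,
      ker_toEuclideanLin_SigmaEa_mul_OmegaInvZero hkrNe hω fun p hp => (he p hp).1]
    rfl
  rw [hker_ba, hker_ea, finrank_inf_orthogonal_comap_span_basisFun eUaH
    (Z := {j | ¬(k - (r + s) ≤ (j : ℕ) ∧ (j : ℕ) < k - r)})
    (by ext j; simp only [Set.mem_union, Set.mem_ofPred_eq]; omega),
    Fin.card_setOf_not_Ico _ _ _ (by omega)]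
  omega

/-- Under the GSVD structure, `dim_ℂ S_be = s` where `S_be = (ker H_ba)^⊥ ⊓ (ker H_ea)^⊥`. -/
theorem finrank_S_be (Nt Nr Ne k r s : ℕ)
    (hNt : 0 < Nt) (hNr : 0 < Nr) (hNe : 0 < Ne)
    (hrsk : r + s ≤ k) (hkNt : k ≤ Nt) (hrsNr : r + s ≤ Nr) (hkrNe : k - r ≤ Ne)
    (Ua : Matrix (Fin Nt) (Fin Nt) ℂ) (Uba : Matrix (Fin Nr) (Fin Nr) ℂ)
    (Uea : Matrix (Fin Ne) (Fin Ne) ℂ)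
    (hUa : Ua ∈ Matrix.unitaryGroup (Fin Nt) ℂ)
    (hUba : Uba ∈ Matrix.unitaryGroup (Fin Nr) ℂ)
    (hUea : Uea ∈ Matrix.unitaryGroup (Fin Ne) ℂ)
    (ω : ℕ → ℂ) (hω : ∀ i < k, ω i ≠ 0)
    (b e : ℕ → ℝ)
    (hb : ∀ p < s, 0 < b p ∧ b p < 1) (he : ∀ p < s, 0 < e p ∧ e p < 1)
    (hbe : ∀ p < s, b p ^ 2 + e p ^ 2 = 1)
    (Hba : Matrix (Fin Nr) (Fin Nt) ℂ) (Hea : Matrix (Fin Ne) (Fin Nt) ℂ)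
    (hHba : Hba = Uba * SigmaBa Nr k r s b * OmegaInvZero k Nt ω * Uaᴴ)
    (hHea : Hea = Uea * SigmaEa Ne k r s e * OmegaInvZero k Nt ω * Uaᴴ) :
    Module.finrank ℂ ↥((LinearMap.ker (Matrix.toEuclideanLin Hba))ᗮ ⊓ (LinearMap.ker (Matrix.toEuclideanLin Hea))ᗮ) = s :=
  finrank_S_be_general Nt Nr Ne k r s hrsk hkNt hrsNr hkrNe Ua Uba Uea hUa hUba hUea ω hω b e hb he
    Hba Hea hHba hHea
end

section
/- Under the GSVD structure, the subspaces S_ba and S_n together span the kernel of H_ea: S_ba + S_n = ker H_ea (as subspaces of ℂ^{N_t}). -/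
/-!
After the unitary change of coordinates `y = Uaᴴ x`, both kernels become coordinate subspaces:
`ker H_ba` is cut out by `y_j = 0` for `k - r - s ≤ j < k`, and `ker H_ea` by `y_j = 0` for
`j < k - r`, because `Ω` is invertible and the nonzero entries of `Σ_ba`, `Σ_ea` are pivots.
Spans of subfamilies of one orthonormal basis form a Boolean algebra in which `ᗮ` is the
complement, so `(Aᗮ ⊓ B) ⊔ (A ⊓ B) = B` for any two of them.
-/

open Matrix

namespace OrthonormalBasis

open Submodule

variable {ι 𝕜 E : Type*} [Fintype ι] [RCLike 𝕜] [NormedAddCommGroup E] [InnerProductSpace 𝕜 E]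
  (b : OrthonormalBasis ι 𝕜 E)

theorem mem_span_image_iff {s : Set ι} {x : E} :
    x ∈ span 𝕜 (b '' s) ↔ ∀ i ∉ s, b.repr x i = 0 := by
  rw [← b.coe_toBasis, b.toBasis.mem_span_image]
  simp only [Set.subset_def, Finset.mem_coe, Finsupp.mem_support_iff, b.coe_toBasis_repr_apply]
  exact forall_congr' fun i => not_imp_comm

theorem span_image_inf_span_image (s t : Set ι) :
    span 𝕜 (b '' s) ⊓ span 𝕜 (b '' t) = span 𝕜 (b '' (s ∩ t)) := by
  ext x
  simp only [mem_inf, mem_span_image_iff, Set.mem_inter_iff, not_and_or]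
  grind

theorem span_image_sup_span_image (s t : Set ι) :
    span 𝕜 (b '' s) ⊔ span 𝕜 (b '' t) = span 𝕜 (b '' (s ∪ t)) := by
  rw [Set.image_union, span_union]

theorem orthogonal_span_image (s : Set ι) : (span 𝕜 (b '' s))ᗮ = span 𝕜 (b '' sᶜ) := by
  ext x
  rw [mem_span_image_iff, mem_orthogonal]
  simp only [Set.mem_compl_iff, not_not]
  refine ⟨fun h i hi => b.repr_apply_apply x i ▸ h _ (subset_span ⟨i, hi, rfl⟩), fun h u hu => ?_⟩
  rw [← b.repr.inner_map_map, PiLp.inner_apply]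
  refine Finset.sum_eq_zero fun i _ => ?_
  by_cases hi : i ∈ s
  · simp [h i hi]
  · simp [(b.mem_span_image_iff.mp hu) i hi]

theorem orthogonal_inf_sup_inf_span_image (s t : Set ι) :
    (span 𝕜 (b '' s))ᗮ ⊓ span 𝕜 (b '' t) ⊔ span 𝕜 (b '' s) ⊓ span 𝕜 (b '' t) =
      span 𝕜 (b '' t) := by
  rw [orthogonal_span_image, span_image_inf_span_image, span_image_inf_span_image,
    span_image_sup_span_image, ← Set.union_inter_distrib_right, Set.compl_union_self,
    Set.univ_inter]

end OrthonormalBasis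

namespace Matrix

variable {m n R : Type*} [Fintype n]

theorem mulVec_eq_zero_iff_of_pivots [Semiring R] [NoZeroDivisors R] {M : Matrix m n R}
    {S : Set n} (hzero : ∀ i, ∀ j ∉ S, M i j = 0)
    (hpivot : ∀ j ∈ S, ∃ i, M i j ≠ 0 ∧ ∀ j' ≠ j, M i j' = 0) {y : n → R} :
    M *ᵥ y = 0 ↔ ∀ j ∈ S, y j = 0 := by
  constructor
  · intro hy j hj
    obtain ⟨i, hij, hrow⟩ := hpivot j hj
    have hyi : (M *ᵥ y) i = M i j * y j :=
      Finset.sum_eq_single j (fun j' _ hj' => by simp [hrow j' hj']) (by simp)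
    rw [hy, Pi.zero_apply] at hyi
    exact (mul_eq_zero.mp hyi.symm).resolve_left hij
  · intro hy
    funext i
    refine Finset.sum_eq_zero fun j _ => ?_
    by_cases hj : j ∈ S
    · simp [hy j hj]
    · simp [hzero i j hj]

variable {𝕜 : Type*} [RCLike 𝕜] [DecidableEq n]

/-- The orthonormal basis formed by the columns of `U`. -/
noncomputable def orthonormalBasisOfMemUnitaryGroup {U : Matrix n n 𝕜}
    (hU : U ∈ unitaryGroup n 𝕜) : OrthonormalBasis n 𝕜 (EuclideanSpace 𝕜 n) :=
  .ofRepr <| Unitary.linearIsometryEquiv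
    ⟨toEuclideanCLM (n := n) (𝕜 := 𝕜) (star U), Unitary.map_mem _ (Unitary.star_mem hU)⟩

theorem repr_orthonormalBasisOfMemUnitaryGroup {U : Matrix n n 𝕜}
    (hU : U ∈ unitaryGroup n 𝕜) (x : EuclideanSpace 𝕜 n) :
    (orthonormalBasisOfMemUnitaryGroup hU).repr x = WithLp.toLp 2 (Uᴴ *ᵥ x) :=
  rfl

theorem ker_toEuclideanLin_unitary_mul [Fintype m] [DecidableEq m] {V : Matrix m m 𝕜}
    (hV : V ∈ unitaryGroup m 𝕜) (M : Matrix m n 𝕜) :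
    LinearMap.ker (toEuclideanLin (V * M)) = LinearMap.ker (toEuclideanLin M) := by
  ext x
  have hVinj : Function.Injective V.mulVec :=
    mulVec_injective_iff_isUnit.mpr (Unitary.isUnit_coe (U := ⟨V, hV⟩))
  simp only [LinearMap.mem_ker, toLpLin_apply, WithLp.toLp_eq_zero, ← mulVec_mulVec]
  exact hVinj.eq_iff' (mulVec_zero V)

end Matrix

section GSVD

variable {Nt Nr Ne k r s : ℕ}

theorem omegaInvZero_mulVec_apply (hkNt : k ≤ Nt) (ω : ℕ → ℂ) (y : Fin Nt → ℂ) (i : Fin k) :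
    (OmegaInvZero k Nt ω *ᵥ y) i = (ω i)⁻¹ * y (Fin.castLE hkNt i) := by
  rw [mulVec, dotProduct, Finset.sum_eq_single (Fin.castLE hkNt i)]
  · simp [OmegaInvZero]
  · intro j _ hj
    have : (j : ℕ) ≠ i := fun h => hj (Fin.ext h)
    simp [OmegaInvZero, this]
  · simp

theorem sigmaBa_mulVec_eq_zero_iff (hrsNr : r + s ≤ Nr) {b : ℕ → ℝ} (hb : ∀ p < s, b p ≠ 0)
    {z : Fin k → ℂ} : SigmaBa Nr k r s b *ᵥ z = 0 ↔ ∀ j : Fin k, k - (r + s) ≤ j → z j = 0 := by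
  refine mulVec_eq_zero_iff_of_pivots (S := {j : Fin k | k - (r + s) ≤ j}) ?_ ?_
  · intro i j hj
    simp only [Set.mem_ofPred_eq] at hj
    simp only [SigmaBa, of_apply]
    rw [if_neg (by omega)]
  · intro j hj
    simp only [Set.mem_ofPred_eq] at hj
    refine ⟨⟨j + Nr - k, by omega⟩, ?_, fun j' hj' => ?_⟩
    · simp only [SigmaBa, of_apply]
      rw [if_pos (by omega)]
      split_ifs
      · exact_mod_cast hb _ (by omega)
      · exact one_ne_zero
    · have := Fin.val_ne_of_ne hj'
      simp only [SigmaBa, of_apply]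
      rw [if_neg (by omega)]

theorem sigmaEa_mulVec_eq_zero_iff (hkrNe : k - r ≤ Ne) {e : ℕ → ℝ} (he : ∀ p < s, e p ≠ 0)
    {z : Fin k → ℂ} : SigmaEa Ne k r s e *ᵥ z = 0 ↔ ∀ j : Fin k, j < k - r → z j = 0 := by
  refine mulVec_eq_zero_iff_of_pivots (S := {j : Fin k | j < k - r}) ?_ ?_
  · intro i j hj
    simp only [Set.mem_ofPred_eq] at hj
    simp only [SigmaEa, of_apply]
    rw [if_neg (by omega)]
  · intro j hj
    simp only [Set.mem_ofPred_eq] at hj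
    refine ⟨⟨j, by omega⟩, ?_, fun j' hj' => ?_⟩
    · simp only [SigmaEa, of_apply, true_and, if_pos hj]
      split_ifs
      · exact one_ne_zero
      · exact_mod_cast he _ (by omega)
    · have := Fin.val_ne_of_ne hj'
      simp only [SigmaEa, of_apply]
      rw [if_neg (by omega)]

theorem ker_mul_omegaInvZero_mul_conjTranspose_eq_span {Nm : ℕ} {V : Matrix (Fin Nm) (Fin Nm) ℂ}
    (hV : V ∈ unitaryGroup (Fin Nm) ℂ) {Ua : Matrix (Fin Nt) (Fin Nt) ℂ}
    (hUa : Ua ∈ unitaryGroup (Fin Nt) ℂ) {Sigma : Matrix (Fin Nm) (Fin k) ℂ} {P : ℕ → Prop}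
    (hSigma : ∀ z, Sigma *ᵥ z = 0 ↔ ∀ j : Fin k, P j → z j = 0)
    (hkNt : k ≤ Nt) {ω : ℕ → ℂ} (hω : ∀ i < k, ω i ≠ 0) :
    LinearMap.ker (toEuclideanLin (V * Sigma * OmegaInvZero k Nt ω * Uaᴴ)) =
      Submodule.span ℂ (orthonormalBasisOfMemUnitaryGroup hUa '' {j | j < k ∧ P j}ᶜ) := by
  rw [Matrix.mul_assoc, Matrix.mul_assoc, ker_toEuclideanLin_unitary_mul hV]
  ext x
  rw [LinearMap.mem_ker, toLpLin_apply, WithLp.toLp_eq_zero, ← mulVec_mulVec, ← mulVec_mulVec,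
    hSigma, OrthonormalBasis.mem_span_image_iff]
  simp only [omegaInvZero_mulVec_apply hkNt, mul_eq_zero, inv_eq_zero, Set.mem_compl_iff,
    Set.mem_ofPred_eq, not_not, repr_orthonormalBasisOfMemUnitaryGroup]
  constructor
  · rintro h j ⟨hjk, hj⟩
    exact (h ⟨j, hjk⟩ hj).resolve_left (hω j hjk)
  · exact fun h j hj => Or.inr (h (Fin.castLE hkNt j) ⟨j.2, hj⟩)

end GSVD

theorem S_ba_sup_S_n_general (Nt Nr Ne k r s : ℕ)
    (hkNt : k ≤ Nt) (hrsNr : r + s ≤ Nr) (hkrNe : k - r ≤ Ne)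
    (Ua : Matrix (Fin Nt) (Fin Nt) ℂ) (Uba : Matrix (Fin Nr) (Fin Nr) ℂ)
    (Uea : Matrix (Fin Ne) (Fin Ne) ℂ)
    (hUa : Ua ∈ Matrix.unitaryGroup (Fin Nt) ℂ)
    (hUba : Uba ∈ Matrix.unitaryGroup (Fin Nr) ℂ)
    (hUea : Uea ∈ Matrix.unitaryGroup (Fin Ne) ℂ)
    (ω : ℕ → ℂ) (hω : ∀ i < k, ω i ≠ 0)
    (b e : ℕ → ℝ)
    (hb : ∀ p < s, 0 < b p ∧ b p < 1) (he : ∀ p < s, 0 < e p ∧ e p < 1)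
    (Hba : Matrix (Fin Nr) (Fin Nt) ℂ) (Hea : Matrix (Fin Ne) (Fin Nt) ℂ)
    (hHba : Hba = Uba * SigmaBa Nr k r s b * OmegaInvZero k Nt ω * Uaᴴ)
    (hHea : Hea = Uea * SigmaEa Ne k r s e * OmegaInvZero k Nt ω * Uaᴴ) :
    ((LinearMap.ker (Matrix.toEuclideanLin Hba))ᗮ ⊓ LinearMap.ker (Matrix.toEuclideanLin Hea)) ⊔ (LinearMap.ker (Matrix.toEuclideanLin Hba) ⊓ LinearMap.ker (Matrix.toEuclideanLin Hea)) = LinearMap.ker (Matrix.toEuclideanLin Hea) := by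
  rw [hHba, hHea,
    ker_mul_omegaInvZero_mul_conjTranspose_eq_span hUba hUa
      (fun _ => sigmaBa_mulVec_eq_zero_iff hrsNr fun p hp => (hb p hp).1.ne') hkNt hω,
    ker_mul_omegaInvZero_mul_conjTranspose_eq_span hUea hUa (P := (· < k - r))
      (fun _ => sigmaEa_mulVec_eq_zero_iff hkrNe fun p hp => (he p hp).1.ne') hkNt hω]
  exact OrthonormalBasis.orthogonal_inf_sup_inf_span_image _ _ _

/-- Under the GSVD structure, `S_ba + S_n = ker H_ea`. -/
theorem S_ba_sup_S_n (Nt Nr Ne k r s : ℕ)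
    (hNt : 0 < Nt) (hNr : 0 < Nr) (hNe : 0 < Ne)
    (hrsk : r + s ≤ k) (hkNt : k ≤ Nt) (hrsNr : r + s ≤ Nr) (hkrNe : k - r ≤ Ne)
    (Ua : Matrix (Fin Nt) (Fin Nt) ℂ) (Uba : Matrix (Fin Nr) (Fin Nr) ℂ)
    (Uea : Matrix (Fin Ne) (Fin Ne) ℂ)
    (hUa : Ua ∈ Matrix.unitaryGroup (Fin Nt) ℂ)
    (hUba : Uba ∈ Matrix.unitaryGroup (Fin Nr) ℂ)
    (hUea : Uea ∈ Matrix.unitaryGroup (Fin Ne) ℂ)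
    (ω : ℕ → ℂ) (hω : ∀ i < k, ω i ≠ 0)
    (b e : ℕ → ℝ)
    (hb : ∀ p < s, 0 < b p ∧ b p < 1) (he : ∀ p < s, 0 < e p ∧ e p < 1)
    (hbe : ∀ p < s, b p ^ 2 + e p ^ 2 = 1)
    (Hba : Matrix (Fin Nr) (Fin Nt) ℂ) (Hea : Matrix (Fin Ne) (Fin Nt) ℂ)
    (hHba : Hba = Uba * SigmaBa Nr k r s b * OmegaInvZero k Nt ω * Uaᴴ)
    (hHea : Hea = Uea * SigmaEa Ne k r s e * OmegaInvZero k Nt ω * Uaᴴ) :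
    ((LinearMap.ker (Matrix.toEuclideanLin Hba))ᗮ ⊓ LinearMap.ker (Matrix.toEuclideanLin Hea)) ⊔ (LinearMap.ker (Matrix.toEuclideanLin Hba) ⊓ LinearMap.ker (Matrix.toEuclideanLin Hea)) = LinearMap.ker (Matrix.toEuclideanLin Hea) :=
  S_ba_sup_S_n_general Nt Nr Ne k r s hkNt hrsNr hkrNe Ua Uba Uea hUa hUba hUea ω hω b e hb he Hba
    Hea hHba hHea
end

section
/- Under the GSVD structure, if the diagonal power allocation matrix P = diag(p_1,…,p_{N_t}) with p_i ≥ 0 satisfies p_i = 0 for every index i ∉ {k−r+1, …, k}, then the eavesdropper's effective channel vanishes: H_ea U_a A P^{1/2} V = 0 for every matrix V ∈ ℂ^{N_t×N_t}. -/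
open Matrix

/-! Unitarity of `U_a` cancels `U_aᴴ U_a`, leaving `U_ea Σ_ea [Ω⁻¹ 0] A P^{1/2} V`. Column `j`
of `Σ_ea [Ω⁻¹ 0] A` is a multiple of column `j` of `Σ_ea`, which vanishes for `j ≥ k − r`, while
`P^{1/2}` kills every column `j < k − r`. -/

theorem Matrix.mul_diagonal_eq_zero_of_forall {m n α : Type*} [Fintype n] [DecidableEq n]
    [NonUnitalNonAssocSemiring α] {M : Matrix m n α} {d : n → α}
    (h : ∀ i j, M i j = 0 ∨ d j = 0) : M * diagonal d = 0 := by
  ext i j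
  rcases h i j with h | h <;> simp [h]

theorem mul_omegaInvZero_apply {m : Type*} {k Nt : ℕ} (ω : ℕ → ℂ) (M : Matrix m (Fin k) ℂ)
    (i : m) (j : Fin Nt) :
    (M * OmegaInvZero k Nt ω) i j = if h : (j : ℕ) < k then M i ⟨j, h⟩ * (ω j)⁻¹ else 0 := by
  rw [mul_apply]
  split_ifs with h
  · rw [Finset.sum_eq_single ⟨j, h⟩]
    · simp [OmegaInvZero]
    · intro l _ hl
      simp [OmegaInvZero, Ne.symm (Fin.val_ne_of_ne hl)]
    · simp
  · refine Finset.sum_eq_zero fun l _ => ?_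
    simp [OmegaInvZero, show (j : ℕ) ≠ l by omega]

theorem mul_amat_apply {m : Type*} {Nt k : ℕ} (ω : ℕ → ℂ) (M : Matrix m (Fin Nt) ℂ)
    (i : m) (j : Fin Nt) :
    (M * Amat Nt k ω) i j = if (j : ℕ) < k then M i j * ω j else 0 := by
  rw [mul_apply, Finset.sum_eq_single j]
  · simp [Amat]
  · intro l _ hl
    simp [Amat, Fin.val_ne_of_ne hl]
  · simp

theorem sigmaEa_apply_eq_zero_of_le {Ne k r s : ℕ} (e : ℕ → ℝ) (i : Fin Ne) {j : Fin k}
    (hj : k - r ≤ j) : SigmaEa Ne k r s e i j = 0 := by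
  simp only [SigmaEa, of_apply]
  rw [if_neg (by omega)]

theorem sigmaEa_mul_omegaInvZero_mul_amat_apply_eq_zero_of_le {Ne Nt k r s : ℕ} (e : ℕ → ℝ)
    (ω : ℕ → ℂ) (i : Fin Ne) {j : Fin Nt} (hj : k - r ≤ j) :
    (SigmaEa Ne k r s e * OmegaInvZero k Nt ω * Amat Nt k ω) i j = 0 := by
  rw [mul_amat_apply, mul_omegaInvZero_apply]
  split_ifs with h
  · simp [sigmaEa_apply_eq_zero_of_le e i (j := ⟨j, h⟩) hj]
  · rfl

theorem eve_effective_channel_vanishes_general (Nt Ne k r s : ℕ)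
    (Ua : Matrix (Fin Nt) (Fin Nt) ℂ)
    (Uea : Matrix (Fin Ne) (Fin Ne) ℂ)
    (hUa : Ua ∈ Matrix.unitaryGroup (Fin Nt) ℂ)
    (ω : ℕ → ℂ)
    (e : ℕ → ℝ)
    (Hea : Matrix (Fin Ne) (Fin Nt) ℂ)
    (hHea : Hea = Uea * SigmaEa Ne k r s e * OmegaInvZero k Nt ω * Uaᴴ)
    (p : ℕ → ℝ)
    (hpzero : ∀ i < Nt, ¬(k - r ≤ i ∧ i < k) → p i = 0)
    (Psqrt : Matrix (Fin Nt) (Fin Nt) ℂ)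
    (hPsqrt : Psqrt = Matrix.diagonal fun i : Fin Nt => ((Real.sqrt (p (i : ℕ)) : ℝ) : ℂ)) :
    ∀ V : Matrix (Fin Nt) (Fin Nt) ℂ, Hea * Ua * Amat Nt k ω * Psqrt * V = 0 := by
  intro V
  have hUa_unitary : Uaᴴ * Ua = 1 := mem_unitaryGroup_iff'.mp hUa
  have hcore : SigmaEa Ne k r s e * OmegaInvZero k Nt ω * Amat Nt k ω * Psqrt = 0 := by
    rw [hPsqrt]
    refine mul_diagonal_eq_zero_of_forall fun i j => ?_
    by_cases hj : k - r ≤ (j : ℕ)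
    · exact .inl (sigmaEa_mul_omegaInvZero_mul_amat_apply_eq_zero_of_le e ω i hj)
    · exact .inr (by simp [hpzero j j.2 (by omega)])
  calc Hea * Ua * Amat Nt k ω * Psqrt * V
      = Uea * (SigmaEa Ne k r s e * OmegaInvZero k Nt ω * (Uaᴴ * Ua) * Amat Nt k ω * Psqrt) * V := by
        simp only [hHea, Matrix.mul_assoc]
    _ = 0 := by rw [hUa_unitary, Matrix.mul_one, hcore, Matrix.mul_zero, Matrix.zero_mul]

/-- Under the GSVD structure, if the power allocation `P = diag(p_1,…,p_{N_t})`, `p_i ≥ 0`, satisfies `p_i = 0` for every index outside `{k−r+1, …, k}` (1-indexed), then `H_ea U_a A P^{1/2} V = 0` for every matrix `V`. -/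
theorem eve_effective_channel_vanishes (Nt Nr Ne k r s : ℕ)
    (hNt : 0 < Nt) (hNr : 0 < Nr) (hNe : 0 < Ne)
    (hrsk : r + s ≤ k) (hkNt : k ≤ Nt) (hrsNr : r + s ≤ Nr) (hkrNe : k - r ≤ Ne)
    (Ua : Matrix (Fin Nt) (Fin Nt) ℂ) (Uba : Matrix (Fin Nr) (Fin Nr) ℂ)
    (Uea : Matrix (Fin Ne) (Fin Ne) ℂ)
    (hUa : Ua ∈ Matrix.unitaryGroup (Fin Nt) ℂ)
    (hUba : Uba ∈ Matrix.unitaryGroup (Fin Nr) ℂ)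
    (hUea : Uea ∈ Matrix.unitaryGroup (Fin Ne) ℂ)
    (ω : ℕ → ℂ) (hω : ∀ i < k, ω i ≠ 0)
    (b e : ℕ → ℝ)
    (hb : ∀ p < s, 0 < b p ∧ b p < 1) (he : ∀ p < s, 0 < e p ∧ e p < 1)
    (hbe : ∀ p < s, b p ^ 2 + e p ^ 2 = 1)
    (Hba : Matrix (Fin Nr) (Fin Nt) ℂ) (Hea : Matrix (Fin Ne) (Fin Nt) ℂ)
    (hHba : Hba = Uba * SigmaBa Nr k r s b * OmegaInvZero k Nt ω * Uaᴴ)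
    (hHea : Hea = Uea * SigmaEa Ne k r s e * OmegaInvZero k Nt ω * Uaᴴ)
    (p : ℕ → ℝ) (hp : ∀ i < Nt, 0 ≤ p i)
    (hpzero : ∀ i < Nt, ¬(k - r ≤ i ∧ i < k) → p i = 0)
    (Psqrt : Matrix (Fin Nt) (Fin Nt) ℂ)
    (hPsqrt : Psqrt = Matrix.diagonal fun i : Fin Nt => ((Real.sqrt (p (i : ℕ)) : ℝ) : ℂ)) :
    ∀ V : Matrix (Fin Nt) (Fin Nt) ℂ, Hea * Ua * Amat Nt k ω * Psqrt * V = 0 :=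
  eve_effective_channel_vanishes_general Nt Ne k r s Ua Uea hUa ω e Hea hHea p hpzero Psqrt hPsqrt
end
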